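/- arXiv:2011.14408 — 8 statements merged into one kernel-verified Lean document; each statement's English description precedes it below -/
import Mathlib

section
/- Let (Q,≤) be a poset with binary operations · and → and a constant 1, let a,b ∈ Q, and let f,g be surjective mappings from Q² to Q with f(a,b) = g(a,b) = 1. On the full twist product (Q²,≤) define the binary operations (x,y)⊙(z,v) := (x·f(z,v), g(z,v)→y) and (x,y)⇒(z,v) := (f(x,y)→z, v·g(x,y)), and take the constant (a,b). Then (Q,≤,·,→,1) is a left-residuated groupoid if and only if (Q²,≤,⊙,⇒,(a,b)) is a left-residuated groupoid. -/
/-- The twist order on Q²: (x,y) ≤ (z,v) iff x ≤ z and v ≤ y. -/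
def twistLe {Q : Type*} [PartialOrder Q] (p r : Q × Q) : Prop :=
  p.1 ≤ r.1 ∧ r.2 ≤ p.2

/-- With surjective f,g : Q² → Q satisfying f(a,b) = g(a,b) = 1, and the
operations (x,y)⊙(z,v) := (x·f(z,v), g(z,v)→y), (x,y)⇒(z,v) := (f(x,y)→z, v·g(x,y))
on the full twist product with constant (a,b), the base structure (Q,≤,·,→,1) is a
left-residuated groupoid iff (Q²,≤,⊙,⇒,(a,b)) is. -/
theorem stmt_5 {Q : Type*} [PartialOrder Q] (mul imp : Q → Q → Q) (one : Q)
    (a b : Q) (f g : Q × Q → Q)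
    (hf : Function.Surjective f) (hg : Function.Surjective g)
    (hfab : f (a, b) = one) (hgab : g (a, b) = one) :
    ((∀ x y z : Q, mul x y ≤ z ↔ x ≤ imp y z) ∧ (∀ x : Q, mul x one = x)) ↔
    ((∀ p r s : Q × Q,
        twistLe (mul p.1 (f r), imp (g r) p.2) s ↔
        twistLe p (imp (f r) s.1, mul s.2 (g r))) ∧
     (∀ p : Q × Q, (mul p.1 (f (a, b)), imp (g (a, b)) p.2) = p)) := by
  constructor
  · rintro ⟨hadj, hunit⟩
    have himp1 : ∀ z : Q, imp one z = z := by
      intro z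
      apply le_antisymm
      · have := (hadj (imp one z) one z).mpr le_rfl
        rwa [hunit] at this
      · exact (hadj z one z).mp (by rw [hunit])
    constructor
    · intro p r s
      unfold twistLe
      simp only
      constructor
      · rintro ⟨h1, h2⟩
        exact ⟨(hadj _ _ _).mp h1, (hadj _ _ _).mpr h2⟩
      · rintro ⟨h1, h2⟩
        exact ⟨(hadj _ _ _).mpr h1, (hadj _ _ _).mp h2⟩
    · intro p
      rw [hfab, hgab, hunit, himp1]
  · rintro ⟨hadj, hunit⟩
    have hmul1 : ∀ x : Q, mul x one = x := by
      intro x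
      have := hunit (x, x)
      rw [hfab] at this
      exact congrArg Prod.fst this
    refine ⟨fun x y z => ?_, hmul1⟩
    obtain ⟨r, hr⟩ := hf y
    set c := g r with hc
    constructor
    · intro h
      have := (hadj (x, x) r (z, imp c x)).mp ⟨by rwa [hr], le_rfl⟩
      exact this.1.trans_eq (by rw [hr])
    · intro h
      have := (hadj (x, mul z c) r (z, z)).mpr ⟨by rwa [hr], le_rfl⟩
      rw [hr] at this
      exact this.1
end

section
/- Let (Q,≤) be a poset with binary operations · and →, let f,g be surjective mappings from Q² to Q, and on the full twist product (Q²,≤) define (x,y)⊙(z,v) := (x·f(z,v), g(z,v)→y) and (x,y)⇒(z,v) := (f(x,y)→z, v·g(x,y)). Then (Q²,≤,⊙,⇒) satisfies left-adjointness (P⊙R ≤ S if and only if P ≤ R⇒S for all P,R,S ∈ Q²) if and only if (Q,≤,·,→) satisfies left-adjointness (x·y ≤ z if and only if x ≤ y→z for all x,y,z ∈ Q). -/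
/-- With surjective f,g : Q² → Q and the operations
(x,y)⊙(z,v) := (x·f(z,v), g(z,v)→y), (x,y)⇒(z,v) := (f(x,y)→z, v·g(x,y)) on the full
twist product, (Q²,≤,⊙,⇒) satisfies left-adjointness iff (Q,≤,·,→) does. -/
theorem stmt_6 {Q : Type*} [PartialOrder Q] (mul imp : Q → Q → Q)
    (f g : Q × Q → Q)
    (hf : Function.Surjective f) (hg : Function.Surjective g) :
    (∀ p r s : Q × Q,
        twistLe (mul p.1 (f r), imp (g r) p.2) s ↔
        twistLe p (imp (f r) s.1, mul s.2 (g r))) ↔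
    (∀ x y z : Q, mul x y ≤ z ↔ x ≤ imp y z) := by
  constructor
  · intro H x y z
    obtain ⟨r, hr⟩ := hf y
    constructor
    · intro h
      have := (H (x, x) r (z, imp (g r) x)).mp ⟨by simpa [hr] using h, le_refl _⟩
      simpa [hr, twistLe] using this.1
    · intro h
      have := (H (x, mul x (g r)) r (z, x)).mpr ⟨by simpa [hr] using h, le_refl _⟩
      simpa [hr, twistLe] using this.1
  · intro H p r s
    exact and_congr (H _ _ _) (H _ _ _).symm
end

section
/- Let (Q,≤) be a poset with binary operations · and → and a constant 1. On the full twist product (Q²,≤) define (x,y)⊙(z,v) := (x·z, v→y) and (x,y)⇒(z,v) := (x→z, v·y), with constant (1,1). Then (Q,≤,·,→,1) is a left-residuated groupoid if and only if (Q²,≤,⊙,⇒,(1,1)) is a left-residuated groupoid. -/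
/-- With (x,y)⊙(z,v) := (x·z, v→y) and (x,y)⇒(z,v) := (x→z, v·y) on the
full twist product with constant (1,1), the structure (Q,≤,·,→,1) is a left-residuated
groupoid iff (Q²,≤,⊙,⇒,(1,1)) is. -/
theorem stmt_8 {Q : Type*} [PartialOrder Q] (mul imp : Q → Q → Q) (one : Q) :
    ((∀ x y z : Q, mul x y ≤ z ↔ x ≤ imp y z) ∧ (∀ x : Q, mul x one = x)) ↔
    ((∀ p r s : Q × Q,
        twistLe (mul p.1 r.1, imp r.2 p.2) s ↔
        twistLe p (imp r.1 s.1, mul s.2 r.2)) ∧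
     (∀ p : Q × Q, (mul p.1 one, imp one p.2) = p)) := by
  constructor
  · rintro ⟨adj, unit⟩
    have impone : ∀ z : Q, imp one z = z := by
      intro z
      have h1 : imp one z ≤ z := by
        have := (adj (imp one z) one z).mpr le_rfl
        rwa [unit] at this
      have h2 : z ≤ imp one z := by
        have := (adj z one z).mp (by rw [unit])
        exact this
      exact le_antisymm h1 h2
    constructor
    · rintro ⟨x, y⟩ ⟨a, b⟩ ⟨z, w⟩
      simp only [twistLe]
      constructor
      · rintro ⟨h1, h2⟩
        exact ⟨(adj x a z).mp h1, (adj w b y).mpr h2⟩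
      · rintro ⟨h1, h2⟩
        exact ⟨(adj x a z).mpr h1, (adj w b y).mp h2⟩
    · rintro ⟨x, y⟩
      simp [unit, impone]
  · rintro ⟨adj, unit⟩
    have u1 : ∀ x : Q, mul x one = x := fun x => congrArg Prod.fst (unit (x, x))
    have u2 : ∀ y : Q, imp one y = y := fun y => congrArg Prod.snd (unit (y, y))
    refine ⟨fun x y z => ?_, u1⟩
    have := adj (x, z) (y, one) (z, z)
    simp only [twistLe, u1, u2] at this
    constructor
    · intro h
      exact ((this.mp ⟨h, le_rfl⟩)).1
    · intro h
      exact (this.mpr ⟨h, le_rfl⟩).1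
end

section
/- Let (Q,≤) be a poset with binary operations · and → and a constant 1. On the full twist product (Q²,≤) define (x,y)⊙(z,v) := (x·v, z→y) and (x,y)⇒(z,v) := (y→z, v·x), with constant (1,1). Then (Q,≤,·,→,1) is a left-residuated groupoid if and only if (Q²,≤,⊙,⇒,(1,1)) is a left-residuated groupoid. -/
/-- With (x,y)⊙(z,v) := (x·v, z→y) and (x,y)⇒(z,v) := (y→z, v·x) on the
full twist product with constant (1,1), the structure (Q,≤,·,→,1) is a left-residuated
groupoid iff (Q²,≤,⊙,⇒,(1,1)) is. -/
theorem stmt_9 {Q : Type*} [PartialOrder Q] (mul imp : Q → Q → Q) (one : Q) :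
    ((∀ x y z : Q, mul x y ≤ z ↔ x ≤ imp y z) ∧ (∀ x : Q, mul x one = x)) ↔
    ((∀ p r s : Q × Q,
        twistLe (mul p.1 r.2, imp r.1 p.2) s ↔
        twistLe p (imp r.2 s.1, mul s.2 r.1)) ∧
     (∀ p : Q × Q, (mul p.1 one, imp one p.2) = p)) := by
  constructor
  · rintro ⟨h1, h2⟩
    have h3 : ∀ y : Q, imp one y = y := by
      intro y
      apply le_antisymm
      · have := (h1 (imp one y) one y).mpr le_rfl
        rwa [h2] at this
      · exact (h1 y one y).mp (by rw [h2])
    constructor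
    · intro p r s
      unfold twistLe
      simp only
      constructor
      · rintro ⟨ha, hb⟩
        exact ⟨(h1 _ _ _).mp ha, (h1 _ _ _).mpr hb⟩
      · rintro ⟨ha, hb⟩
        exact ⟨(h1 _ _ _).mpr ha, (h1 _ _ _).mp hb⟩
    · intro p
      rw [h2, h3]
  · rintro ⟨h1, h2⟩
    have hm : ∀ x : Q, mul x one = x := fun x =>
      congrArg Prod.fst (h2 (x, x))
    refine ⟨fun x y z => ?_, hm⟩
    have := h1 (x, z) (one, y) (z, z)
    unfold twistLe at this
    simp only at this
    constructor
    · intro h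
      exact (this.mp ⟨h, (congrArg Prod.snd (h2 (z, z))).ge⟩).1
    · intro h
      exact (this.mpr ⟨h, (hm z).le⟩).1
end

section
/- Let (Q,≤,·,→,0,1) be a bounded commutative residuated monoid. On the full twist product (Q²,≤) define the set-valued operator (x,y)⊙(z,v) := {(x·z, x→v), (x·z, z→y)} ⊆ Q². Then ⊙ is operator associative: for all P,R,S ∈ Q², the union of U⊙S over all U ∈ P⊙R equals the union of P⊙U over all U ∈ R⊙S. -/
/-- The set-valued operator ⊙ on the full twist product:
(x,y)⊙(z,v) := {(x·z, x→v), (x·z, z→y)}. -/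
def twistOdot {Q : Type*} (mul imp : Q → Q → Q) (p r : Q × Q) : Set (Q × Q) :=
  {(mul p.1 r.1, imp p.1 r.2), (mul p.1 r.1, imp r.1 p.2)}

/-- For a bounded commutative residuated monoid (Q,≤,·,→,0,1), the
operator (x,y)⊙(z,v) := {(x·z, x→v), (x·z, z→y)} on the full twist product is
operator associative: ⋃_{u ∈ P⊙R} (u⊙S) = ⋃_{u ∈ R⊙S} (P⊙u). -/
theorem stmt_11 {Q : Type*} [PartialOrder Q] (mul imp : Q → Q → Q) (zero one : Q)
    (hbot : ∀ x : Q, zero ≤ x) (htop : ∀ x : Q, x ≤ one)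
    (hcomm : ∀ x y : Q, mul x y = mul y x)
    (hassoc : ∀ x y z : Q, mul (mul x y) z = mul x (mul y z))
    (h3 : ∀ x y z : Q, mul x y ≤ z ↔ x ≤ imp y z)
    (h6 : ∀ x : Q, mul x one = x) :
    ∀ p r s : Q × Q,
      (⋃ u ∈ twistOdot mul imp p r, twistOdot mul imp u s) =
      (⋃ u ∈ twistOdot mul imp r s, twistOdot mul imp p u) := by
  have curry : ∀ a b c : Q, imp (mul a b) c = imp a (imp b c) := by
    intro a b c
    apply le_antisymm
    · rw [← h3, ← h3, hassoc]
      exact (h3 _ _ _).mpr le_rfl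
    · rw [← h3]
      have : mul (mul (imp a (imp b c)) a) b ≤ c := by
        rw [h3]
        exact (h3 _ _ _).mpr le_rfl
      rwa [hassoc] at this
  have swap : ∀ a b c : Q, imp a (imp b c) = imp b (imp a c) := by
    intro a b c
    rw [← curry, ← curry, hcomm]
  rintro ⟨x, y⟩ ⟨z, v⟩ ⟨w, t⟩
  ext ⟨a, b⟩
  simp only [twistOdot, Set.mem_iUnion, Set.mem_insert_iff, Set.mem_singleton_iff,
    Prod.mk.injEq, exists_prop]
  constructor
  · rintro ⟨u, (hu | hu), h⟩ <;> subst hu <;> simp only at h <;>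
      rcases h with ⟨ha, hb⟩ | ⟨ha, hb⟩ <;> subst ha <;> subst hb
    · exact ⟨(mul z w, imp z t), Or.inl rfl, Or.inl ⟨hassoc .., curry ..⟩⟩
    · refine ⟨(mul z w, imp w v), Or.inr rfl, Or.inl ⟨hassoc .., ?_⟩⟩
      rw [swap]
    · exact ⟨(mul z w, imp z t), Or.inl rfl, Or.inl ⟨hassoc .., curry ..⟩⟩
    · refine ⟨(mul z w, imp z t), Or.inl rfl, Or.inr ⟨hassoc .., ?_⟩⟩
      rw [curry, swap]
  · rintro ⟨u, (hu | hu), h⟩ <;> subst hu <;> simp only at h <;>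
      rcases h with ⟨ha, hb⟩ | ⟨ha, hb⟩ <;> subst ha <;> subst hb
    · exact ⟨(mul x z, imp x v), Or.inl rfl, Or.inl ⟨(hassoc ..).symm, (curry ..).symm⟩⟩
    · refine ⟨(mul x z, imp z y), Or.inr rfl, Or.inr ⟨(hassoc ..).symm, ?_⟩⟩
      rw [curry, swap]
    · refine ⟨(mul x z, imp x v), Or.inl rfl, Or.inr ⟨(hassoc ..).symm, ?_⟩⟩
      rw [swap]
    · refine ⟨(mul x z, imp z y), Or.inr rfl, Or.inr ⟨(hassoc ..).symm, ?_⟩⟩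
      rw [curry, swap]
end

section
/- Let (Q,≤,·,→,0,1) be a bounded commutative residuated monoid. On the full twist product (Q²,≤) define the set-valued operators (x,y)⊙(z,v) := {(x·z, x→v), (x·z, z→y)} and (x,y)⇒(z,v) := {(x→z, x·v), (v→y, x·v)}. Then for all (x,y),(z,v),(t,w) ∈ Q²: every element of (x,y)⊙(z,v) is ≤ (t,w) in the twist order if and only if (x,y) is ≤ every element of (z,v)⇒(t,w) in the twist order. -/
/-- The set-valued operator ⇒ on the full twist product:
(x,y)⇒(z,v) := {(x→z, x·v), (v→y, x·v)}. -/
def twistRimp {Q : Type*} (mul imp : Q → Q → Q) (p r : Q × Q) : Set (Q × Q) :=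
  {(imp p.1 r.1, mul p.1 r.2), (imp r.2 p.2, mul p.1 r.2)}

/-- For a bounded commutative residuated monoid (Q,≤,·,→,0,1) the
operators ⊙ and ⇒ on the full twist product satisfy operator residuation:
(x,y)⊙(z,v) ≤ (t,w) iff (x,y) ≤ (z,v)⇒(t,w). -/
theorem stmt_12 {Q : Type*} [PartialOrder Q] (mul imp : Q → Q → Q) (zero one : Q)
    (hbot : ∀ x : Q, zero ≤ x) (htop : ∀ x : Q, x ≤ one)
    (hcomm : ∀ x y : Q, mul x y = mul y x)
    (hassoc : ∀ x y z : Q, mul (mul x y) z = mul x (mul y z))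
    (h3 : ∀ x y z : Q, mul x y ≤ z ↔ x ≤ imp y z)
    (h6 : ∀ x : Q, mul x one = x) :
    ∀ p r t : Q × Q,
      (∀ u ∈ twistOdot mul imp p r, twistLe u t) ↔
      (∀ u ∈ twistRimp mul imp r t, twistLe p u) := by
  have key : ∀ a b c : Q, a ≤ imp b c ↔ b ≤ imp a c := fun a b c => by
    rw [← h3, hcomm, h3]
  rintro ⟨x, y⟩ ⟨z, v⟩ ⟨t, w⟩
  simp only [twistOdot, twistRimp, twistLe, Set.mem_insert_iff, Set.mem_singleton_iff]
  constructor
  · rintro h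
    have h1 := h _ (Or.inl rfl)
    have h2 := h _ (Or.inr rfl)
    rintro u (rfl | rfl)
    · exact ⟨(h3 x z t).mp h1.1, (h3 z w y).mpr ((key w z y).mp h2.2)⟩
    · exact ⟨(key w x v).mp h1.2, (h3 z w y).mpr ((key w z y).mp h2.2)⟩
  · rintro h
    have h1 := h _ (Or.inl rfl)
    have h2 := h _ (Or.inr rfl)
    rintro u (rfl | rfl)
    · exact ⟨(h3 x z t).mpr h1.1, (key x w v).mp h2.1⟩
    · exact ⟨(h3 x z t).mpr h1.1, (key z w y).mp ((h3 z w y).mp h1.2)⟩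
end

section
/- Let (Q,≤,·,→,0,1) be a bounded commutative residuated monoid, let a ∈ Q satisfy a·a = a, and assume that every element of P_a(Q) is comparable with (a,a) in the twist order. Define set-valued operators on pairs by (x,y)⊙(z,v) := {(x·z, x→v), (x·z, z→y)} and (x,y)⇒(z,v) := {(x→z, x·v), (v→y, x·v)}. Then (x,y)⊙(z,v) ⊆ P_a(Q) and (x,y)⇒(z,v) ⊆ P_a(Q) for all (x,y),(z,v) ∈ P_a(Q) (so that (P_a(Q),≤,⊙,⇒,(0,1),(1,0)) is an operator residuated poset) if and only if the following two conditions hold: (11) for all x ∈ Q, a·x < a implies a·x = 0, and (12) for all x ∈ Q, a < x implies x→a = a. -/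
/-- P_a(Q) := {(x,y) ∈ Q² : L(x,y) ≤ a ≤ U(x,y)}, i.e. every common lower bound of
x,y is ≤ a and a ≤ every common upper bound of x,y. -/
def Pa {Q : Type*} [PartialOrder Q] (a : Q) : Set (Q × Q) :=
  {p | (∀ w : Q, w ≤ p.1 → w ≤ p.2 → w ≤ a) ∧ (∀ w : Q, p.1 ≤ w → p.2 ≤ w → a ≤ w)}

/-- Let (Q,≤,·,→,0,1) be a bounded commutative residuated monoid,
a ∈ Q with a·a = a, and assume every element of P_a(Q) is comparable with (a,a) in
the twist order. Then P_a(Q) is closed under the operators ⊙ and ⇒ iff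
(11) a·x < a implies a·x = 0, and (12) a < x implies x→a = a. -/
theorem stmt_13 {Q : Type*} [PartialOrder Q] (mul imp : Q → Q → Q) (zero one : Q)
    (hbot : ∀ x : Q, zero ≤ x) (htop : ∀ x : Q, x ≤ one)
    (hcomm : ∀ x y : Q, mul x y = mul y x)
    (hassoc : ∀ x y z : Q, mul (mul x y) z = mul x (mul y z))
    (h3 : ∀ x y z : Q, mul x y ≤ z ↔ x ≤ imp y z)
    (h6 : ∀ x : Q, mul x one = x)
    (a : Q) (ha : mul a a = a)
    (hcompar : ∀ p ∈ Pa a, twistLe p (a, a) ∨ twistLe (a, a) p) :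
    (∀ p ∈ Pa a, ∀ r ∈ Pa a,
        twistOdot mul imp p r ⊆ Pa a ∧ twistRimp mul imp p r ⊆ Pa a) ↔
    ((∀ x : Q, mul a x < a → mul a x = zero) ∧
     (∀ x : Q, a < x → imp x a = a)) := by
  -- basic monotonicity facts
  have mono1 : ∀ {x y : Q} (z : Q), x ≤ y → mul x z ≤ mul y z := by
    intro x y z hxy
    have h : y ≤ imp z (mul y z) := (h3 y z (mul y z)).mp le_rfl
    exact (h3 x z (mul y z)).mpr (hxy.trans h)
  have mono2 : ∀ (x : Q) {y z : Q}, y ≤ z → mul x y ≤ mul x z := by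
    intro x y z h
    rw [hcomm x y, hcomm x z]; exact mono1 x h
  have defl1 : ∀ x z : Q, mul x z ≤ x := by
    intro x z
    have h := mono2 x (htop z)
    rwa [h6] at h
  have defl2 : ∀ x z : Q, mul x z ≤ z := by
    intro x z; rw [hcomm]; exact defl1 z x
  have le_imp_self : ∀ x z : Q, z ≤ imp x z := fun x z => (h3 z x z).mp (defl1 z x)
  have L0 : ∀ {u : Q}, a ≤ u → mul a u = a := by
    intro u hu
    refine le_antisymm (defl1 a u) ?_
    calc a = mul a a := ha.symm
    _ ≤ mul a u := mono2 a hu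
  have memPa : ∀ {x y : Q}, (x ≤ a ∧ a ≤ y) ∨ (a ≤ x ∧ y ≤ a) → (x, y) ∈ Pa a := by
    intro x y h
    rcases h with ⟨h1, h2⟩ | ⟨h1, h2⟩
    · exact ⟨fun w hw _ => hw.trans h1, fun w _ hw => h2.trans hw⟩
    · exact ⟨fun w _ hw => hw.trans h2, fun w hw _ => h1.trans hw⟩
  have paCnd : ∀ {x y : Q}, (x, y) ∈ Pa a → (x ≤ a ∧ a ≤ y) ∨ (a ≤ x ∧ y ≤ a) := by
    intro x y h
    rcases hcompar (x, y) h with ⟨h1, h2⟩ | ⟨h1, h2⟩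
    · exact Or.inl ⟨h1, h2⟩
    · exact Or.inr ⟨h1, h2⟩
  have chain : ∀ e : Q, e ≤ a ∨ a ≤ e := by
    intro e
    have hmem : (a, e) ∈ Pa a := ⟨fun w hw _ => hw, fun w hw _ => hw⟩
    rcases hcompar (a, e) hmem with ⟨_, h2⟩ | ⟨_, h2⟩
    · exact Or.inr h2
    · exact Or.inl h2
  constructor
  · -- closure → (11) ∧ (12)
    intro H
    constructor
    · intro x hx
      have hba : mul (mul a x) a = mul a x := by
        calc mul (mul a x) a = mul a (mul x a) := hassoc a x a
        _ = mul a (mul a x) := by rw [hcomm x a]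
        _ = mul (mul a a) x := (hassoc a a x).symm
        _ = mul a x := by rw [ha]
      have hp : (mul a x, one) ∈ Pa a := memPa (Or.inl ⟨hx.le, htop a⟩)
      have hr : (a, zero) ∈ Pa a := memPa (Or.inr ⟨le_rfl, hbot a⟩)
      have hsub := (H _ hp _ hr).1
      have hmem : (mul (mul a x) a, imp (mul a x) zero)
          ∈ twistOdot mul imp (mul a x, one) (a, zero) := Set.mem_insert _ _
      have hc := paCnd (hsub hmem)
      rw [hba] at hc
      rcases hc with ⟨_, h2⟩ | ⟨h1, _⟩
      · have h0 : mul a (mul a x) ≤ zero := (h3 a (mul a x) zero).mpr h2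
        rw [hcomm a (mul a x), hba] at h0
        exact le_antisymm h0 (hbot _)
      · exact absurd h1 hx.not_ge
    · intro x hx
      have hp : (x, zero) ∈ Pa a := memPa (Or.inr ⟨hx.le, hbot a⟩)
      have hr : (a, one) ∈ Pa a := memPa (Or.inl ⟨le_rfl, htop a⟩)
      have hsub := (H _ hp _ hr).2
      have hmem : (imp x a, mul x one) ∈ twistRimp mul imp (x, zero) (a, one) :=
        Set.mem_insert _ _
      have hc := paCnd (hsub hmem)
      rw [h6] at hc
      rcases hc with ⟨h1, _⟩ | ⟨_, h2⟩
      · exact le_antisymm h1 (le_imp_self x a)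
      · exact absurd h2 hx.not_ge
  · -- (11) ∧ (12) → closure
    rintro ⟨h11, h12⟩
    have mul_a_small : ∀ {u : Q}, u < a → mul a u = zero := by
      intro u hu
      exact h11 u (lt_of_le_of_lt (defl2 a u) hu)
    have lemA : ∀ {x z v : Q}, (x ≤ a ∨ a ≤ x) → ((z ≤ a ∧ a ≤ v) ∨ (a ≤ z ∧ v ≤ a)) →
        ((mul x z ≤ a ∧ a ≤ imp x v) ∨ (a ≤ mul x z ∧ imp x v ≤ a)) := by
      intro x z v hx hzv
      rcases hx with hx | hx
      · rcases hzv with ⟨hz, hv⟩ | ⟨hz, hv⟩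
        · exact Or.inl ⟨(defl1 x z).trans hx, hv.trans (le_imp_self x v)⟩
        · rcases hx.lt_or_eq with hx' | hx'
          · have h0 : mul a x = zero := mul_a_small hx'
            exact Or.inl ⟨(defl1 x z).trans hx'.le,
              (h3 a x v).mp (by rw [h0]; exact hbot v)⟩
          · rw [hx']
            rcases hv.lt_or_eq with hv' | hv'
            · refine Or.inr ⟨(L0 hz).ge, ?_⟩
              rcases chain (imp a v) with h | h
              · exact h
              · exfalso
                have hv2 : mul a a ≤ v := (h3 a a v).mpr h
                rw [ha] at hv2
                exact absurd hv2 hv'.not_ge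
            · rw [hv']
              exact Or.inl ⟨defl1 a z, le_imp_self a a⟩
      · rcases hzv with ⟨hz, hv⟩ | ⟨hz, hv⟩
        · exact Or.inl ⟨(defl2 x z).trans hz, hv.trans (le_imp_self x v)⟩
        · have hmz : a ≤ mul x z := by
            calc a = mul a a := ha.symm
            _ ≤ mul x a := mono1 a hx
            _ ≤ mul x z := mono2 x hz
          rcases chain (imp x v) with h | h
          · exact Or.inr ⟨hmz, h⟩
          · have hav : a ≤ v := by
              have h2 := (h3 a x v).mpr h
              rwa [L0 hx] at h2
            have hv' : v = a := le_antisymm hv hav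
            rw [hv']
            rcases hx.lt_or_eq with hx' | hx'
            · exact Or.inr ⟨hmz, le_of_eq (h12 x hx')⟩
            · rw [← hx']
              exact Or.inl ⟨defl1 a z, le_imp_self a a⟩
    have lemB : ∀ {x z v : Q}, (x ≤ a ∨ a ≤ x) → ((z ≤ a ∧ a ≤ v) ∨ (a ≤ z ∧ v ≤ a)) →
        ((imp x z ≤ a ∧ a ≤ mul x v) ∨ (a ≤ imp x z ∧ mul x v ≤ a)) := by
      intro x z v hx hzv
      rcases hx with hx | hx
      · rcases hzv with ⟨hz, hv⟩ | ⟨hz, hv⟩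
        · rcases hx.lt_or_eq with hx' | hx'
          · have h0 : mul a x = zero := mul_a_small hx'
            exact Or.inr ⟨(h3 a x z).mp (by rw [h0]; exact hbot z),
              (defl1 x v).trans hx'.le⟩
          · rw [hx']
            rcases hz.lt_or_eq with hz' | hz'
            · refine Or.inl ⟨?_, (L0 hv).ge⟩
              rcases chain (imp a z) with h | h
              · exact h
              · exfalso
                have hz2 : mul a a ≤ z := (h3 a a z).mpr h
                rw [ha] at hz2
                exact absurd hz2 hz'.not_ge
            · rw [hz']
              exact Or.inr ⟨le_imp_self a a, defl1 a v⟩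
        · exact Or.inr ⟨hz.trans (le_imp_self x z), (defl2 x v).trans hv⟩
      · rcases hzv with ⟨hz, hv⟩ | ⟨hz, hv⟩
        · have hmv : a ≤ mul x v := by
            calc a = mul a a := ha.symm
            _ ≤ mul x a := mono1 a hx
            _ ≤ mul x v := mono2 x hv
          rcases chain (imp x z) with h | h
          · exact Or.inl ⟨h, hmv⟩
          · have haz : a ≤ z := by
              have h2 := (h3 a x z).mpr h
              rwa [L0 hx] at h2
            have hz' : z = a := le_antisymm hz haz
            rw [hz']
            rcases hx.lt_or_eq with hx' | hx'
            · exact Or.inl ⟨le_of_eq (h12 x hx'), hmv⟩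
            · rw [← hx']
              exact Or.inr ⟨le_imp_self a a, defl1 a v⟩
        · exact Or.inr ⟨hz.trans (le_imp_self x z), (defl2 x v).trans hv⟩
    intro p hp r hr
    obtain ⟨x, y⟩ := p
    obtain ⟨z, v⟩ := r
    have cp := paCnd hp
    have cr := paCnd hr
    have hxc : x ≤ a ∨ a ≤ x := by
      rcases cp with ⟨h1, _⟩ | ⟨h1, _⟩
      exacts [Or.inl h1, Or.inr h1]
    have hzc : z ≤ a ∨ a ≤ z := by
      rcases cr with ⟨h1, _⟩ | ⟨h1, _⟩
      exacts [Or.inl h1, Or.inr h1]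
    have hvc : v ≤ a ∨ a ≤ v := by
      rcases cr with ⟨_, h2⟩ | ⟨_, h2⟩
      exacts [Or.inr h2, Or.inl h2]
    have cyx : (y ≤ a ∧ a ≤ x) ∨ (a ≤ y ∧ x ≤ a) := by
      rcases cp with ⟨h1, h2⟩ | ⟨h1, h2⟩
      exacts [Or.inr ⟨h2, h1⟩, Or.inl ⟨h2, h1⟩]
    constructor
    · intro q hq
      rcases hq with rfl | hq
      · exact memPa (lemA hxc cr)
      · rw [Set.mem_singleton_iff] at hq
        subst hq
        have h := lemA hzc cp
        rw [hcomm z x] at h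
        exact memPa h
    · intro q hq
      rcases hq with rfl | hq
      · exact memPa (lemB hxc cr)
      · rw [Set.mem_singleton_iff] at hq
        subst hq
        have h := lemB hvc cyx
        rw [hcomm v x] at h
        exact memPa h
end

section
/- Let (Q,≤) be a poset and a ∈ Q. Then (P_a(Q),≤,') where (x,y)' := (y,x) is a pseudo-Kleene poset: P_a(Q) is closed under ', the map ' is an antitone involution on (P_a(Q),≤) (with the twist order), and L(P,P') ≤ U(R,R') holds for all P,R ∈ P_a(Q), i.e., every common lower bound of P and P' is ≤ every common upper bound of R and R'. -/
/-- (P_a(Q),≤,') with (x,y)' := (y,x) is a pseudo-Kleene poset: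
P_a(Q) is closed under ', the map ' is an antitone involution on (P_a(Q),≤) with
the twist order, and L(P,P') ≤ U(R,R') for all P,R ∈ P_a(Q). -/
theorem stmt_14 {Q : Type*} [PartialOrder Q] (a : Q) :
    (∀ p ∈ Pa a, (p.2, p.1) ∈ Pa a) ∧
    (∀ p ∈ Pa a, ∀ r ∈ Pa a, twistLe p r → twistLe (r.2, r.1) (p.2, p.1)) ∧
    (∀ p : Q × Q, ((p.2, p.1).2, (p.2, p.1).1) = p) ∧
    (∀ p ∈ Pa a, ∀ r ∈ Pa a, ∀ u ∈ Pa a, ∀ v ∈ Pa a,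
      twistLe u p → twistLe u (p.2, p.1) →
      twistLe r v → twistLe (r.2, r.1) v → twistLe u v) := by
  refine ⟨?_, ?_, ?_, ?_⟩
  · rintro p ⟨hL, hU⟩
    exact ⟨fun w h1 h2 => hL w h2 h1, fun w h1 h2 => hU w h2 h1⟩
  · rintro p _ r _ ⟨h1, h2⟩
    exact ⟨h2, h1⟩
  · intro p; rfl
  · rintro p ⟨pL, pU⟩ r ⟨rL, rU⟩ u _ v ⟨_, _⟩ ⟨h1, h2⟩ ⟨h3, h4⟩ ⟨h5, h6⟩ ⟨h7, h8⟩
    exact ⟨le_trans (pL u.1 h1 h3) (rU v.1 h5 h7), le_trans (rL v.2 h8 h6) (pU u.2 h4 h2)⟩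
end
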